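/- arXiv:2109.10647 — 2 statements merged into one kernel-verified Lean document; each statement's English description precedes it below -/
import Mathlib

section
/- Let f ∈ C¹([a,b]) with a < b, and let x* ∈ [a,b] be a point where f² attains its minimum over [a,b]. Then for every z ∈ [a,b] and every ε > 0, f(z)² ≤ f(x*)² + ε² ∫_a^b |f'(x)|² dx + ε⁻² ∫_a^b f(x)² dx, and moreover f(x*)² ≤ (b-a)⁻¹ ∫_a^b f(x)² dx. -/
/-!
Write `f(z)² - f(x*)² = ∫_{x*}^z 2 f f'`, bound this by `∫_a^b |2 f f'|`, and split the integrand
with Young's inequality `2|f f'| ≤ ε² |f'|² + ε⁻² f²`. The bound on `f(x*)²` holds because the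
minimum of `f²` lies below its mean.
-/

open Real Set MeasureTheory

lemma abs_two_mul_le_sq_mul_add_inv_sq_mul {ε : ℝ} (hε : ε ≠ 0) (u v : ℝ) :
    |2 * u * v| ≤ ε ^ 2 * |v| ^ 2 + (ε ^ 2)⁻¹ * u ^ 2 :=
  calc |2 * u * v| = 2 * (ε * |v|) * (ε⁻¹ * |u|) := by
        rw [abs_mul, abs_mul, abs_two]; field_simp
    _ ≤ (ε * |v|) ^ 2 + (ε⁻¹ * |u|) ^ 2 := two_mul_le_add_sq _ _
    _ = ε ^ 2 * |v| ^ 2 + (ε ^ 2)⁻¹ * u ^ 2 := by simp only [mul_pow, inv_pow, sq_abs]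

lemma intervalIntegral_abs_two_mul_le {u v : ℝ → ℝ} {a b ε : ℝ} (hab : a ≤ b) (hε : ε ≠ 0)
    (hu : IntervalIntegrable (fun x => u x ^ 2) volume a b)
    (hv : IntervalIntegrable (fun x => |v x| ^ 2) volume a b) :
    ∫ x in a..b, |2 * u x * v x| ≤
      ε ^ 2 * (∫ x in a..b, |v x| ^ 2) + (ε ^ 2)⁻¹ * ∫ x in a..b, u x ^ 2 := by
  have hv' := hv.const_mul (ε ^ 2)
  have hu' := hu.const_mul (ε ^ 2)⁻¹
  rw [← intervalIntegral.integral_const_mul, ← intervalIntegral.integral_const_mul,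
    ← intervalIntegral.integral_add hv' hu']
  by_cases huv : IntervalIntegrable (fun x => |2 * u x * v x|) volume a b
  · exact intervalIntegral.integral_mono_on hab huv (hv'.add hu')
      fun x _ => abs_two_mul_le_sq_mul_add_inv_sq_mul hε (u x) (v x)
  · rw [intervalIntegral.integral_undef huv]
    exact intervalIntegral.integral_nonneg hab fun x _ => by positivity

lemma abs_intervalIntegral_le_integral_abs_of_mem_Icc {g : ℝ → ℝ} {a b c d : ℝ} (hab : a ≤ b)
    (hg : IntervalIntegrable g volume a b) (hc : c ∈ Icc a b) (hd : d ∈ Icc a b) :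
    |∫ x in c..d, g x| ≤ ∫ x in a..b, |g x| := by
  have hsub : uIoc c d ⊆ Ioc a b := Ioc_subset_Ioc (le_min hc.1 hd.1) (max_le hc.2 hd.2)
  rw [← Real.norm_eq_abs, intervalIntegral.norm_integral_eq_norm_integral_uIoc,
    intervalIntegral.integral_of_le hab]
  calc ‖∫ x in uIoc c d, g x‖ ≤ ∫ x in uIoc c d, ‖g x‖ := norm_integral_le_integral_norm _
    _ ≤ ∫ x in Ioc a b, |g x| :=
      setIntegral_mono_set ((hg.1).norm) (ae_of_all _ fun _ => norm_nonneg _)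
        hsub.eventuallyLE

lemma sq_sub_sq_eq_intervalIntegral {f f' : ℝ → ℝ} {c d : ℝ}
    (hf : ∀ x ∈ uIcc c d, HasDerivAt f (f' x) x)
    (hint : IntervalIntegrable (fun x => 2 * f x * f' x) volume c d) :
    f d ^ 2 - f c ^ 2 = ∫ x in c..d, 2 * f x * f' x :=
  (intervalIntegral.integral_eq_sub_of_hasDerivAt
    (fun x hx => by simpa [mul_comm] using (hf x hx).pow 2) hint).symm

lemma le_inv_sub_mul_intervalIntegral {h : ℝ → ℝ} {a b m : ℝ} (hab : a < b)
    (hh : IntervalIntegrable h volume a b) (hm : ∀ x ∈ Icc a b, m ≤ h x) :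
    m ≤ (b - a)⁻¹ * ∫ x in a..b, h x := by
  have hmean : ∫ _ in a..b, m ≤ ∫ x in a..b, h x :=
    intervalIntegral.integral_mono_on hab.le intervalIntegrable_const hh hm
  rw [intervalIntegral.integral_const, smul_eq_mul] at hmean
  rwa [le_inv_mul_iff₀ (sub_pos.2 hab)]

/-- Key computation in the proof of the interpolation inequality: if `f ∈ C¹([a,b])`
and `x*` minimizes `f²` on `[a,b]`, then for every `z ∈ [a,b]` and `ε > 0`,
`f(z)² ≤ f(x*)² + ε² ∫ |f'|² + ε⁻² ∫ f²`, and `f(x*)² ≤ (b-a)⁻¹ ∫ f²`. -/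
theorem stmt1 (a b : ℝ) (hab : a < b) (f f' : ℝ → ℝ)
    (hf : ∀ x ∈ Icc a b, HasDerivAt f (f' x) x)
    (hf' : ContinuousOn f' (Icc a b))
    (xs : ℝ) (hxs : xs ∈ Icc a b)
    (hmin : ∀ x ∈ Icc a b, (f xs) ^ 2 ≤ (f x) ^ 2) :
    (∀ z ∈ Icc a b, ∀ ε : ℝ, 0 < ε →
      (f z) ^ 2 ≤ (f xs) ^ 2 + ε ^ 2 * (∫ x in a..b, |f' x| ^ 2) +
        (ε ^ 2)⁻¹ * ∫ x in a..b, (f x) ^ 2) ∧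
    (f xs) ^ 2 ≤ (b - a)⁻¹ * ∫ x in a..b, (f x) ^ 2 := by
  have hfc : ContinuousOn f (Icc a b) := fun x hx => (hf x hx).continuousAt.continuousWithinAt
  have hsq : IntervalIntegrable (fun x => f x ^ 2) volume a b :=
    (hfc.pow 2).intervalIntegrable_of_Icc hab.le
  refine ⟨fun z hz ε hε => ?_, le_inv_sub_mul_intervalIntegral hab hsq hmin⟩
  have hsub : uIcc xs z ⊆ Icc a b := uIcc_subset_Icc hxs hz
  have hprod : ContinuousOn (fun x => 2 * f x * f' x) (Icc a b) :=
    (continuousOn_const.mul hfc).mul hf'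
  calc f z ^ 2 = f xs ^ 2 + ∫ x in xs..z, 2 * f x * f' x := by
        rw [← sq_sub_sq_eq_intervalIntegral (fun x hx => hf x (hsub hx))
          ((hprod.mono hsub).intervalIntegrable)]
        ring
    _ ≤ f xs ^ 2 + ∫ x in a..b, |2 * f x * f' x| := by
        gcongr
        exact (le_abs_self _).trans (abs_intervalIntegral_le_integral_abs_of_mem_Icc hab.le
          (hprod.intervalIntegrable_of_Icc hab.le) hxs hz)
    _ ≤ _ := by
        rw [add_assoc]
        gcongr
        exact intervalIntegral_abs_two_mul_le hab.le hε.ne' hsq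
          ((hf'.abs.pow 2).intervalIntegrable_of_Icc hab.le)
end

section
/- Let D₂ ⊂ ℝ be a bounded measurable set, let a₂, i₀ : D₂ → ℝ be measurable with a₂(x) i₀(x) ≥ c > 0 for a.e. x ∈ D₂, and let β > 0. For φ₁, φ₂, φ̂₁, φ̂₂ ∈ L²(D₂) and a fixed measurable function m : D₂ → ℝ, set η = φ₂ − φ₁ − m and η̂ = φ̂₂ − φ̂₁ − m. Then ∫_{D₂} a₂ i₀ (sinh(β η) − sinh(β η̂)) ((φ₂ − φ̂₂) − (φ₁ − φ̂₁)) dx ≥ c β ∫_{D₂} ((φ₂ − φ̂₂) − (φ₁ − φ̂₁))² dx ≥ 0. -/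
open Real MeasureTheory

lemma Real.sub_le_sinh_sub_sinh {a b : ℝ} (h : b ≤ a) : a - b ≤ sinh a - sinh b := by
  linarith [Real.sinh_sub_id_strictMono.monotone h]

lemma Real.mul_sq_le_sinh_mul_sub_sinh_mul_mul {β : ℝ} (hβ : 0 ≤ β) (s t : ℝ) :
    β * (s - t) ^ 2 ≤ (sinh (β * s) - sinh (β * t)) * (s - t) := by
  rcases le_total t s with h | h <;>
    nlinarith [Real.sub_le_sinh_sub_sinh (mul_le_mul_of_nonneg_left h hβ)]

/-- No integrability of `(η - η')²` is needed: otherwise the left-hand side is the junk value `0`. -/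
lemma mul_integral_sq_le_integral_weighted_sinh_sub {α : Type*} [MeasurableSpace α]
    {μ : Measure α} {w η η' : α → ℝ} {c β : ℝ} (hc : 0 ≤ c) (hβ : 0 ≤ β)
    (hw : ∀ᵐ x ∂μ, c ≤ w x)
    (hint : Integrable (fun x => w x * (sinh (β * η x) - sinh (β * η' x)) * (η x - η' x)) μ) :
    c * β * ∫ x, (η x - η' x) ^ 2 ∂μ ≤
      ∫ x, w x * (sinh (β * η x) - sinh (β * η' x)) * (η x - η' x) ∂μ := by
  rw [mul_assoc, ← integral_const_mul, ← integral_const_mul]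
  refine integral_mono_of_nonneg (.of_forall fun x => by positivity) hint ?_
  filter_upwards [hw] with x hx
  calc c * (β * (η x - η' x) ^ 2) ≤ w x * (β * (η x - η' x) ^ 2) := by gcongr
    _ ≤ w x * ((sinh (β * η x) - sinh (β * η' x)) * (η x - η' x)) :=
      mul_le_mul_of_nonneg_left (Real.mul_sq_le_sinh_mul_sub_sinh_mul_mul hβ _ _)
        (hc.trans hx)
    _ = _ := by ring

theorem stmt10_general (D₂ : Set ℝ)
    (a₂ i₀ m φ₁ φ₂ ψ₁ ψ₂ : ℝ → ℝ) (c β : ℝ) (hc : 0 < c) (hβ : 0 < β)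
    (hlb : ∀ᵐ x ∂(MeasureTheory.volume.restrict D₂), c ≤ a₂ x * i₀ x)
    (hint1 : IntegrableOn (fun x => a₂ x * i₀ x *
        (Real.sinh (β * ((φ₂ x - φ₁ x) - m x)) -
          Real.sinh (β * ((ψ₂ x - ψ₁ x) - m x))) *
        ((φ₂ x - ψ₂ x) - (φ₁ x - ψ₁ x))) D₂ MeasureTheory.volume) :
    c * β * (∫ x in D₂, ((φ₂ x - ψ₂ x) - (φ₁ x - ψ₁ x)) ^ 2) ≤
      (∫ x in D₂, a₂ x * i₀ x *
        (Real.sinh (β * ((φ₂ x - φ₁ x) - m x)) -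
          Real.sinh (β * ((ψ₂ x - ψ₁ x) - m x))) *
        ((φ₂ x - ψ₂ x) - (φ₁ x - ψ₁ x))) ∧
    0 ≤ c * β * ∫ x in D₂, ((φ₂ x - ψ₂ x) - (φ₁ x - ψ₁ x)) ^ 2 := by
  have hdiff : ∀ x, (φ₂ x - ψ₂ x) - (φ₁ x - ψ₁ x) = (φ₂ x - φ₁ x - m x) - (ψ₂ x - ψ₁ x - m x) :=
    fun x => by ring
  simp only [hdiff] at hint1 ⊢
  exact ⟨mul_integral_sq_le_integral_weighted_sinh_sub hc.le hβ.le hlb hint1,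
    by positivity⟩

/-- Monotonicity of the Butler–Volmer operator: with `η = φ₂ − φ₁ − m`,
`η̂ = φ̂₂ − φ̂₁ − m` and `a₂ i₀ ≥ c > 0` a.e. on `D₂`,
`∫ a₂ i₀ (sinh(βη) − sinh(βη̂)) ((φ₂−φ̂₂) − (φ₁−φ̂₁)) ≥ cβ ∫ ((φ₂−φ̂₂)−(φ₁−φ̂₁))² ≥ 0`. -/
theorem stmt10 (D₂ : Set ℝ) (hD : MeasurableSet D₂) (hbdd : Bornology.IsBounded D₂)
    (a₂ i₀ m φ₁ φ₂ ψ₁ ψ₂ : ℝ → ℝ) (c β : ℝ) (hc : 0 < c) (hβ : 0 < β)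
    (hlb : ∀ᵐ x ∂(MeasureTheory.volume.restrict D₂), c ≤ a₂ x * i₀ x)
    (hint1 : IntegrableOn (fun x => a₂ x * i₀ x *
        (Real.sinh (β * ((φ₂ x - φ₁ x) - m x)) -
          Real.sinh (β * ((ψ₂ x - ψ₁ x) - m x))) *
        ((φ₂ x - ψ₂ x) - (φ₁ x - ψ₁ x))) D₂ MeasureTheory.volume)
    (hint2 : IntegrableOn (fun x => ((φ₂ x - ψ₂ x) - (φ₁ x - ψ₁ x)) ^ 2) D₂
      MeasureTheory.volume) :
    c * β * (∫ x in D₂, ((φ₂ x - ψ₂ x) - (φ₁ x - ψ₁ x)) ^ 2) ≤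
      (∫ x in D₂, a₂ x * i₀ x *
        (Real.sinh (β * ((φ₂ x - φ₁ x) - m x)) -
          Real.sinh (β * ((ψ₂ x - ψ₁ x) - m x))) *
        ((φ₂ x - ψ₂ x) - (φ₁ x - ψ₁ x))) ∧
    0 ≤ c * β * ∫ x in D₂, ((φ₂ x - ψ₂ x) - (φ₁ x - ψ₁ x)) ^ 2 :=
  stmt10_general D₂ a₂ i₀ m φ₁ φ₂ ψ₁ ψ₂ c β hc hβ hlb hint1
end
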